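/- Let f : ℝ → ℝ be C¹ and T-periodic, let g > 0, and suppose f belongs to the class 𝒞. Then in the restricted bouncing-ball system, case (1), there exist initial conditions for which both balls P₁ and P₂ have unbounded velocity. -/

import Mathlib

/-! Resonance. With `P = K T`, the derivative `f'` takes the value `g P / 2` at some
`γ ∈ [P, 2P)`. Let `P₂` hit the plate at the times `c n = γ + (n² + 2 N n) P`, all congruent
to `γ` modulo `P`: the plate is then always at height `f γ` and moves up at speed `g P / 2`,
so each bounce raises the take-off speed of `P₂` by `g P`, which is exactly what the next
flight, `2 P` longer than the previous one, needs. The flights of `P₁` peak at the times `c n`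
and cross consecutively on the arcs of `P₂`, so `P₁` meets `P₂` once per flight of `P₂`.
Both speeds grow linearly in `n`; for `N` large the flights of `P₂` stay above the Lipschitz
plate. -/

open Filter Topology

/-- A motion of the restricted bouncing-ball system, case (1): the positive-mass
ball `P₂` (position `x₂`, velocity `v₂`) moves between the oscillating plate
`f` and the zero-mass ball `P₁` (position `x₁`, velocity `v₁`) above it, in
constant gravity `g`.  `P₂` bounces on the plate unaffected by `P₁` (plate
collision times `coll₂`, reflection `v₂⁺ = −v₂⁻ + 2 f'(t)`), while `P₁`
free-falls and reflects off `P₂` by `v₁⁺ = −v₁⁻ + 2 v₂(t)` at the ball–ball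
collision times `q n`, which increase to infinity. -/
structure RestrictedMotionCase1 (g : ℝ) (f : ℝ → ℝ) where
  x₁ : ℝ → ℝ
  x₂ : ℝ → ℝ
  v₁ : ℝ → ℝ
  v₂ : ℝ → ℝ
  coll₂ : Set ℝ
  q : ℕ → ℝ
  cont₁ : ContinuousOn x₁ (Set.Ici 0)
  cont₂ : ContinuousOn x₂ (Set.Ici 0)
  order : ∀ t ∈ Set.Ici (0 : ℝ), f t ≤ x₂ t ∧ x₂ t ≤ x₁ t
  coll₂_sub : coll₂ ⊆ Set.Ici 0
  coll₂_discrete : ∀ t : ℝ, ∃ ε > (0 : ℝ), ∀ s ∈ coll₂, |s - t| < ε → s = t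
  freefall₂ : ∀ t ∈ Set.Ici (0 : ℝ) \ coll₂,
    HasDerivAt x₂ (v₂ t) t ∧ HasDerivAt v₂ (-g) t
  contact₂_mem : ∀ t ∈ Set.Ici (0 : ℝ), x₂ t = f t → t ∈ coll₂
  coll₂_contact : ∀ t ∈ coll₂, x₂ t = f t
  plate_law : ∀ t ∈ coll₂, 0 < t →
    ∃ a b : ℝ, Tendsto v₂ (𝓝[<] t) (𝓝 a) ∧ Tendsto v₂ (𝓝[>] t) (𝓝 b) ∧
      b = -a + 2 * deriv f t
  q_strictMono : StrictMono q
  q_nonneg : ∀ n : ℕ, 0 ≤ q n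
  q_tendsto : Tendsto q atTop atTop
  q_contact : ∀ n : ℕ, x₁ (q n) = x₂ (q n)
  contact₁_mem : ∀ t ∈ Set.Ici (0 : ℝ), x₁ t = x₂ t → ∃ n : ℕ, q n = t
  freefall₁ : ∀ t ∈ Set.Ici (0 : ℝ), (∀ n : ℕ, q n ≠ t) →
    HasDerivAt x₁ (v₁ t) t ∧ HasDerivAt v₁ (-g) t
  ball_law : ∀ n : ℕ, ∃ a : ℝ, Tendsto v₁ (𝓝[<] (q n)) (𝓝 a) ∧
    Tendsto v₁ (𝓝[>] (q n)) (𝓝 (-a + 2 * v₂ (q n)))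

open Set Function
open scoped NNReal

theorem Function.Periodic.deriv {E : Type*} [NormedAddCommGroup E] [NormedSpace ℝ E]
    {f : ℝ → E} {c : ℝ} (hf : Periodic f c) : Periodic (_root_.deriv f) c := fun x => by
  rw [← deriv_comp_add_const, hf.funext]

theorem Function.Periodic.exists_lipschitzWith {E : Type*} [NormedAddCommGroup E]
    [NormedSpace ℝ E] {f : ℝ → E} {c : ℝ} (hp : Periodic f c) (hc : c ≠ 0)
    (hf : ContDiff ℝ 1 f) : ∃ L, LipschitzWith L f := by
  obtain ⟨C, hC⟩ := isBounded_iff_forall_norm_le.1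
    (hp.deriv.isBounded_of_continuous hc (hf.continuous_deriv le_rfl))
  refine ⟨C.toNNReal, lipschitzWith_of_nnnorm_deriv_le (hf.differentiable one_ne_zero)
    fun x => ?_⟩
  rw [← NNReal.coe_le_coe, coe_nnnorm]
  exact (hC _ (mem_range_self x)).trans (Real.le_coe_toNNReal C)

theorem not_exists_forall_abs_le_of_tendsto_atTop {v : ℝ → ℝ} {τ : ℕ → ℝ}
    (hτ : ∀ n, 0 ≤ τ n) (hv : Tendsto (fun n => v (τ n)) atTop atTop) :
    ¬ ∃ C : ℝ, ∀ t ∈ Ici (0 : ℝ), |v t| ≤ C := by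
  rintro ⟨C, hC⟩
  obtain ⟨n, hn⟩ := (hv.eventually_gt_atTop C).exists
  exact hn.not_ge ((le_abs_self _).trans (hC _ (hτ n)))

theorem exists_forall_abs_sub_lt_imp_eq {s : ℕ → ℝ} (hs : Tendsto s atTop atTop) (t : ℝ) :
    ∃ ε > 0, ∀ x ∈ range s, |x - t| < ε → x = t := by
  have hfin : {n | s n ≤ t + 1}.Finite := by
    rw [← Nat.cofinite_eq_atTop] at hs
    simpa only [not_lt] using eventually_cofinite.1 (hs.eventually_gt_atTop (t + 1))
  have hclosed : IsClosed (s '' {n | s n ≤ t + 1} \ {t}) := (hfin.image s).sdiff.isClosed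
  obtain ⟨ε, hε, hball⟩ := Metric.isOpen_iff.1 hclosed.isOpen_compl t fun h => h.2 rfl
  refine ⟨min ε 1, lt_min hε one_pos, ?_⟩
  rintro _ ⟨n, rfl⟩ hn
  by_contra hne
  have hn' := abs_lt.1 (hn.trans_le (min_le_right ε 1))
  exact hball (Metric.mem_ball.2 (by rw [Real.dist_eq]; exact hn.trans_le (min_le_left _ _)))
    ⟨⟨n, show s n ≤ t + 1 by linarith, rfl⟩, hne⟩

theorem lt_or_exists_mem_Ico {s : ℕ → ℝ} (hs : Tendsto s atTop atTop) (t : ℝ) :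
    t < s 0 ∨ ∃ n, t ∈ Ico (s n) (s (n + 1)) := by
  classical
  have hex : ∃ k, t < s k := (hs.eventually_gt_atTop t).exists
  rcases hk : Nat.find hex with _ | n
  · exact .inl (hk ▸ Nat.find_spec hex)
  · exact .inr ⟨n, not_lt.1 (Nat.find_min hex (hk ▸ n.lt_succ_self)), hk ▸ Nat.find_spec hex⟩

/-- Piece `0` is used on `(-∞, s 0)` and piece `n + 1` on `[s n, s (n + 1))`. -/
noncomputable def piecewiseSeq {β : Type*} (s : ℕ → ℝ) (F : ℕ → ℝ → β) (t : ℝ) : β :=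
  F (sInf {n | t < s n}) t

section PiecewiseSeq

variable {β : Type*} {s : ℕ → ℝ} {F : ℕ → ℝ → β} {t : ℝ}

theorem piecewiseSeq_eq {n : ℕ} (hlt : t < s n) (hle : ∀ m < n, s m ≤ t) :
    piecewiseSeq s F t = F n t := by
  have : sInf {k | t < s k} = n := le_antisymm (Nat.sInf_le hlt)
    (le_csInf ⟨n, hlt⟩ fun m hm => not_lt.1 fun hmn => (hle m hmn).not_gt hm)
  rw [piecewiseSeq, this]

theorem piecewiseSeq_of_lt (h : t < s 0) : piecewiseSeq s F t = F 0 t :=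
  piecewiseSeq_eq h fun _ hm => absurd hm (Nat.not_lt_zero _)

theorem piecewiseSeq_of_mem_Ico (hs : Monotone s) {n : ℕ} (h : t ∈ Ico (s n) (s (n + 1))) :
    piecewiseSeq s F t = F (n + 1) t :=
  piecewiseSeq_eq h.2 fun _ hm => (hs (Nat.lt_succ_iff.1 hm)).trans h.1

variable (hs : StrictMono s)
include hs

theorem piecewiseSeq_apply_self (n : ℕ) : piecewiseSeq s F (s n) = F (n + 1) (s n) :=
  piecewiseSeq_of_mem_Ico hs.monotone ⟨le_rfl, hs n.lt_succ_self⟩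

theorem piecewiseSeq_eventuallyEq_nhdsLT (n : ℕ) : piecewiseSeq s F =ᶠ[𝓝[<] s n] F n := by
  cases n with
  | zero => filter_upwards [self_mem_nhdsWithin] with x hx using piecewiseSeq_of_lt hx
  | succ m =>
    filter_upwards [Ioo_mem_nhdsLT (hs m.lt_succ_self)] with x hx
    exact piecewiseSeq_of_mem_Ico hs.monotone ⟨hx.1.le, hx.2⟩

theorem piecewiseSeq_eventuallyEq_nhdsGE (n : ℕ) :
    piecewiseSeq s F =ᶠ[𝓝[≥] s n] F (n + 1) := by
  filter_upwards [Ico_mem_nhdsGE (hs n.lt_succ_self)] with x hx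
  exact piecewiseSeq_of_mem_Ico hs.monotone hx

theorem exists_piecewiseSeq_eventuallyEq (hst : Tendsto s atTop atTop) (ht : t ∉ range s) :
    ∃ k, ∀ F : ℕ → ℝ → β, piecewiseSeq s F =ᶠ[𝓝 t] F k := by
  rcases lt_or_exists_mem_Ico hst t with h | ⟨n, hn⟩
  · exact ⟨0, fun F => by
      filter_upwards [Iio_mem_nhds h] with x hx using piecewiseSeq_of_lt hx⟩
  · have hlt : s n < t := hn.1.lt_of_ne fun h => ht ⟨n, h⟩
    exact ⟨n + 1, fun F => by
      filter_upwards [Ioo_mem_nhds hlt hn.2] with x hx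
      exact piecewiseSeq_of_mem_Ico hs.monotone ⟨hx.1.le, hx.2⟩⟩

section Continuous

variable [TopologicalSpace β] (hF : ∀ k, Continuous (F k))
include hF

theorem tendsto_piecewiseSeq_nhdsLT (n : ℕ) :
    Tendsto (piecewiseSeq s F) (𝓝[<] s n) (𝓝 (F n (s n))) :=
  (hF n).continuousWithinAt.tendsto.congr' (piecewiseSeq_eventuallyEq_nhdsLT hs n).symm

theorem tendsto_piecewiseSeq_nhdsGE (n : ℕ) :
    Tendsto (piecewiseSeq s F) (𝓝[≥] s n) (𝓝 (F (n + 1) (s n))) :=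
  (hF _).continuousWithinAt.tendsto.congr' (piecewiseSeq_eventuallyEq_nhdsGE hs n).symm

theorem continuous_piecewiseSeq (hst : Tendsto s atTop atTop)
    (hmatch : ∀ n, F n (s n) = F (n + 1) (s n)) : Continuous (piecewiseSeq s F) := by
  refine continuous_iff_continuousAt.2 fun t => ?_
  by_cases ht : t ∈ range s
  · obtain ⟨n, rfl⟩ := ht
    rw [ContinuousAt, ← nhdsLT_sup_nhdsGE, tendsto_sup, piecewiseSeq_apply_self hs, ← hmatch]
    exact ⟨tendsto_piecewiseSeq_nhdsLT hs hF n, hmatch n ▸ tendsto_piecewiseSeq_nhdsGE hs hF n⟩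
  · obtain ⟨k, hk⟩ := exists_piecewiseSeq_eventuallyEq hs hst ht
    exact (hF k).continuousAt.congr (hk F).symm

end Continuous

theorem hasDerivAt_piecewiseSeq {E : Type*} [NormedAddCommGroup E] [NormedSpace ℝ E]
    {F F' : ℕ → ℝ → E} (hst : Tendsto s atTop atTop)
    (hF : ∀ k x, HasDerivAt (F k) (F' k x) x) (ht : t ∉ range s) :
    HasDerivAt (piecewiseSeq s F) (piecewiseSeq s F' t) t := by
  obtain ⟨k, hk⟩ := exists_piecewiseSeq_eventuallyEq hs hst ht
  rw [(hk F').eq_of_nhds]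
  exact (hF k t).congr_of_eventuallyEq (hk F)

end PiecewiseSeq

noncomputable def flight (g τ H t : ℝ) : ℝ := H - g / 2 * (t - τ) ^ 2

noncomputable def arc (g h a b t : ℝ) : ℝ := h + g / 2 * (t - a) * (b - t)

section Flight

variable (g τ H h a b t : ℝ)

theorem hasDerivAt_flight : HasDerivAt (flight g τ H) (-g * (t - τ)) t := by
  have hsq : HasDerivAt (fun x => (x - τ) ^ 2) (2 * (t - τ)) t := by
    simpa using ((hasDerivAt_id' t).sub_const τ).fun_pow 2
  exact ((hsq.const_mul (g / 2)).const_sub H).congr_deriv (by ring)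

theorem arc_eq_flight : arc g h a b = flight g ((a + b) / 2) (h + g / 8 * (b - a) ^ 2) := by
  ext x; simp only [arc, flight]; ring

theorem hasDerivAt_arc : HasDerivAt (arc g h a b) (-g * (t - (a + b) / 2)) t :=
  arc_eq_flight g h a b ▸ hasDerivAt_flight _ _ _ t

theorem hasDerivAt_neg_mul_sub : HasDerivAt (fun x => -g * (x - τ)) (-g) t := by
  simpa using ((hasDerivAt_id' t).sub_const τ).const_mul (-g)

theorem continuous_flight : Continuous (flight g τ H) := by unfold flight; fun_prop

theorem continuous_arc : Continuous (arc g h a b) := by unfold arc; fun_prop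

@[simp] theorem arc_left : arc g h a b a = h := by simp [arc]

@[simp] theorem arc_right : arc g h a b b = h := by simp [arc]

end Flight

theorem lt_arc_of_lipschitzWith {f : ℝ → ℝ} {L : ℝ≥0} (hf : LipschitzWith L f)
    {g h a b t : ℝ} (ha : f a = h) (hb : f b = h) (hat : a < t) (htb : t < b)
    (hL : L < g / 2 * max (t - a) (b - t)) : f t < arc g h a b t := by
  have hlip : ∀ x, f x = h → f t - h ≤ L * |t - x| := fun x hx => by
    simpa [← hx, Real.dist_eq] using (le_abs_self _).trans (hf.dist_le_mul t x)
  unfold arc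
  rcases le_total (t - a) (b - t) with hle | hle
  · rw [max_eq_right hle] at hL
    have := hlip a ha
    rw [abs_of_pos (sub_pos.2 hat)] at this
    nlinarith [mul_lt_mul_of_pos_right hL (sub_pos.2 hat)]
  · rw [max_eq_left hle] at hL
    have := hlip b hb
    rw [abs_of_neg (sub_neg.2 htb)] at this
    nlinarith [mul_lt_mul_of_pos_right hL (sub_pos.2 htb)]

/-- Gravity `g`, plate period `P`, first plate collision `γ`, plate height `h` there, and the
offset `N` in the flight lengths `(2 (N + k) - 1) P` of `P₂`. -/
structure ResonantOrbit where
  g : ℝ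
  P : ℝ
  γ : ℝ
  h : ℝ
  N : ℕ
  g_pos : 0 < g
  P_pos : 0 < P
  γ_pos : 0 < γ
  γ_lt : γ < 2 * P
  three_le_N : 3 ≤ N

namespace ResonantOrbit

variable (D : ResonantOrbit)

noncomputable def c (n : ℕ) : ℝ := D.γ + (n + 2 * D.N) * n * D.P

noncomputable def takeoff (k : ℕ) : ℝ := D.c k - (2 * (D.N + k) - 1) * D.P

noncomputable def q (n : ℕ) : ℝ := D.c n + (D.N + n - 1 / 2) * D.P

/-- Chosen so that the flights `n` and `n + 1` of `P₁` cross at time `q n` on the arc of `P₂`. -/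
noncomputable def apex₁ (k : ℕ) : ℝ := D.h + D.g * D.P ^ 2 / 4 * (4 * (D.N + k) ^ 2 - 1)

noncomputable def x₂ : ℝ → ℝ := piecewiseSeq D.c fun k => arc D.g D.h (D.takeoff k) (D.c k)

noncomputable def v₂ : ℝ → ℝ :=
  piecewiseSeq D.c fun k t => -D.g * (t - (D.takeoff k + D.c k) / 2)

noncomputable def x₁ : ℝ → ℝ := piecewiseSeq D.q fun k => flight D.g (D.c k) (D.apex₁ k)

noncomputable def v₁ : ℝ → ℝ := piecewiseSeq D.q fun k t => -D.g * (t - D.c k)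

theorem three_le_cast_N : (3 : ℝ) ≤ D.N := by exact_mod_cast D.three_le_N

theorem takeoff_succ (n : ℕ) : D.takeoff (n + 1) = D.c n := by
  simp only [takeoff, c]; push_cast; ring

theorem takeoff_zero_neg : D.takeoff 0 < 0 := by
  have := D.three_le_cast_N
  simp only [takeoff, c]; push_cast; nlinarith [D.γ_lt, D.P_pos]

theorem c_succ (n : ℕ) : D.c (n + 1) = D.c n + (2 * (D.N + n) + 1) * D.P := by
  simp only [c]; push_cast; ring

theorem c_strictMono : StrictMono D.c := strictMono_nat_of_lt_succ fun n => by
  rw [c_succ]; exact lt_add_of_pos_right _ (mul_pos (by positivity) D.P_pos)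

theorem γ_add_le_c (n : ℕ) : D.γ + n * D.P ≤ D.c n := by
  have hn : (0 : ℝ) ≤ n := n.cast_nonneg
  have := mul_nonneg (mul_nonneg hn (by linarith [D.three_le_cast_N] :
    (0 : ℝ) ≤ n + 2 * D.N - 1)) D.P_pos.le
  simp only [c]; nlinarith

theorem tendsto_c : Tendsto D.c atTop atTop :=
  tendsto_atTop_mono D.γ_add_le_c <| tendsto_atTop_add_const_left _ _ <|
    tendsto_natCast_atTop_atTop.atTop_mul_const D.P_pos

theorem c_pos (n : ℕ) : 0 < D.c n :=
  D.γ_pos.trans_le <| (le_add_of_nonneg_right (mul_nonneg n.cast_nonneg D.P_pos.le)).trans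
    (D.γ_add_le_c n)

theorem c_lt_q (n : ℕ) : D.c n < D.q n :=
  lt_add_of_pos_right _ <|
    mul_pos (by linarith [D.three_le_cast_N, n.cast_nonneg (α := ℝ)]) D.P_pos

theorem q_lt_c_succ (n : ℕ) : D.q n < D.c (n + 1) := by
  rw [c_succ, q]; have := D.P_pos; gcongr; linarith

theorem q_pos (n : ℕ) : 0 < D.q n := (D.c_pos n).trans (D.c_lt_q n)

theorem q_strictMono : StrictMono D.q :=
  strictMono_nat_of_lt_succ fun n => (D.q_lt_c_succ n).trans (D.c_lt_q _)

theorem tendsto_q : Tendsto D.q atTop atTop :=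
  tendsto_atTop_mono (fun n => (D.c_lt_q n).le) D.tendsto_c

theorem continuous_x₂ : Continuous D.x₂ :=
  continuous_piecewiseSeq D.c_strictMono (fun _ => continuous_arc ..) D.tendsto_c
    fun n => by simp [takeoff_succ]

theorem continuous_x₁ : Continuous D.x₁ :=
  continuous_piecewiseSeq D.q_strictMono (fun _ => continuous_flight ..) D.tendsto_q
    fun n => by simp only [flight, apex₁, q, c]; push_cast; ring

theorem hasDerivAt_x₂ {t : ℝ} (ht : t ∉ range D.c) : HasDerivAt D.x₂ (D.v₂ t) t :=
  hasDerivAt_piecewiseSeq D.c_strictMono D.tendsto_c (fun _ _ => hasDerivAt_arc ..) ht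

theorem hasDerivAt_v₂ {t : ℝ} (ht : t ∉ range D.c) : HasDerivAt D.v₂ (-D.g) t :=
  hasDerivAt_piecewiseSeq D.c_strictMono D.tendsto_c (fun _ _ => hasDerivAt_neg_mul_sub ..) ht

theorem hasDerivAt_x₁ {t : ℝ} (ht : t ∉ range D.q) : HasDerivAt D.x₁ (D.v₁ t) t :=
  hasDerivAt_piecewiseSeq D.q_strictMono D.tendsto_q (fun _ _ => hasDerivAt_flight ..) ht

theorem hasDerivAt_v₁ {t : ℝ} (ht : t ∉ range D.q) : HasDerivAt D.v₁ (-D.g) t :=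
  hasDerivAt_piecewiseSeq D.q_strictMono D.tendsto_q (fun _ _ => hasDerivAt_neg_mul_sub ..) ht

theorem x₂_c (n : ℕ) : D.x₂ (D.c n) = D.h := by
  rw [x₂, piecewiseSeq_apply_self D.c_strictMono, takeoff_succ, arc_left]

theorem x₂_q (n : ℕ) : D.x₂ (D.q n) = arc D.g D.h (D.c n) (D.c (n + 1)) (D.q n) := by
  rw [x₂, piecewiseSeq_of_mem_Ico D.c_strictMono.monotone ⟨(D.c_lt_q n).le, D.q_lt_c_succ n⟩,
    takeoff_succ]

theorem x₁_q (n : ℕ) : D.x₁ (D.q n) = D.x₂ (D.q n) := by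
  rw [x₂_q, x₁, piecewiseSeq_apply_self D.q_strictMono]
  simp only [flight, arc, apex₁, q, c]; push_cast; ring

/-- Both balls fall with acceleration `-g`, so their gap is affine on each common piece. -/
theorem x₂_lt_x₁ {t : ℝ} (h0 : 0 ≤ t) (ht : t ∉ range D.q) : D.x₂ t < D.x₁ t := by
  have hN := D.three_le_cast_N
  have hP := D.P_pos
  rw [← sub_pos]
  rcases lt_or_exists_mem_Ico D.tendsto_c t with h | ⟨n, hn⟩
  · rw [x₂, x₁, piecewiseSeq_of_lt h, piecewiseSeq_of_lt (h.trans (D.c_lt_q 0))]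
    have hgap : 0 < (2 * D.N + 1) * D.P / 2 - (D.c 0 - t) := by
      simp only [c]; push_cast; nlinarith [D.γ_lt]
    have hκ : 0 < D.g * (2 * D.N - 1) * D.P / 2 :=
      div_pos (mul_pos (mul_pos D.g_pos (by linarith)) hP) two_pos
    refine (mul_pos hκ hgap).trans_eq ?_
    simp only [flight, arc, apex₁, takeoff, c]; push_cast; ring
  · have hκ : 0 < D.g * (2 * (D.N + n) + 1) * D.P / 2 :=
      div_pos (mul_pos (mul_pos D.g_pos (by linarith [n.cast_nonneg (α := ℝ)])) hP) two_pos
    rw [x₂, piecewiseSeq_of_mem_Ico D.c_strictMono.monotone hn, takeoff_succ, x₁]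
    rcases lt_or_gt_of_ne fun h => ht ⟨n, h⟩ with hq | hq
    · rw [piecewiseSeq_of_mem_Ico D.q_strictMono.monotone ⟨hq.le, hn.2.trans (D.c_lt_q _)⟩]
      refine (mul_pos hκ (sub_pos.2 hq)).trans_eq ?_
      simp only [flight, arc, apex₁, q, c]; push_cast; ring
    · rw [piecewiseSeq_eq hq fun m hm =>
        ((D.q_lt_c_succ m).trans_le (D.c_strictMono.monotone hm)).le.trans hn.1]
      refine (mul_pos hκ (sub_pos.2 hq)).trans_eq ?_
      simp only [flight, arc, apex₁, q, c]; push_cast; ring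

theorem v₂_c (n : ℕ) : D.v₂ (D.c n) = D.g * (2 * (D.N + n) + 1) * D.P / 2 := by
  rw [v₂, piecewiseSeq_apply_self D.c_strictMono, takeoff_succ, c_succ]; ring

theorem v₂_q (n : ℕ) : D.v₂ (D.q n) = -D.g * (D.q n - (D.c n + D.c (n + 1)) / 2) := by
  rw [v₂, piecewiseSeq_of_mem_Ico D.c_strictMono.monotone ⟨(D.c_lt_q n).le, D.q_lt_c_succ n⟩,
    takeoff_succ]

theorem v₁_q (n : ℕ) : D.v₁ (D.q n) = D.g * (D.N + n + 3 / 2) * D.P := by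
  rw [v₁, piecewiseSeq_apply_self D.q_strictMono]
  simp only [q, c]; push_cast; ring

theorem tendsto_v₂_c : Tendsto (fun n => D.v₂ (D.c n)) atTop atTop := by
  refine tendsto_atTop_mono (fun n => ?_)
    (tendsto_natCast_atTop_atTop.atTop_mul_const (mul_pos D.g_pos D.P_pos))
  rw [v₂_c]; nlinarith [mul_pos D.g_pos D.P_pos, D.N.cast_nonneg (α := ℝ)]

theorem tendsto_v₁_q : Tendsto (fun n => D.v₁ (D.q n)) atTop atTop := by
  refine tendsto_atTop_mono (fun n => ?_)
    (tendsto_natCast_atTop_atTop.atTop_mul_const (mul_pos D.g_pos D.P_pos))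
  rw [v₁_q]; nlinarith [mul_pos D.g_pos D.P_pos, D.N.cast_nonneg (α := ℝ)]

theorem tendsto_v₂_nhdsLT (n : ℕ) :
    Tendsto D.v₂ (𝓝[<] D.c n) (𝓝 (-D.g * (D.c n - (D.takeoff n + D.c n) / 2))) :=
  tendsto_piecewiseSeq_nhdsLT D.c_strictMono (fun _ => by fun_prop) n

theorem tendsto_v₂_nhdsGT (n : ℕ) :
    Tendsto D.v₂ (𝓝[>] D.c n) (𝓝 (-D.g * (D.c n - (D.c n + D.c (n + 1)) / 2))) :=
  takeoff_succ D n ▸ (tendsto_piecewiseSeq_nhdsGE D.c_strictMono (fun _ => by fun_prop) n).mono_left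
    (nhdsWithin_mono _ Ioi_subset_Ici_self)

theorem v₂_reflection (n : ℕ) : -D.g * (D.c n - (D.c n + D.c (n + 1)) / 2) =
    -(-D.g * (D.c n - (D.takeoff n + D.c n) / 2)) + 2 * (D.g * D.P / 2) := by
  simp only [takeoff, c]; push_cast; ring

theorem tendsto_v₁_nhdsLT (n : ℕ) :
    Tendsto D.v₁ (𝓝[<] D.q n) (𝓝 (-D.g * (D.q n - D.c n))) :=
  tendsto_piecewiseSeq_nhdsLT D.q_strictMono (fun _ => by fun_prop) n

theorem tendsto_v₁_nhdsGT (n : ℕ) :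
    Tendsto D.v₁ (𝓝[>] D.q n) (𝓝 (-(-D.g * (D.q n - D.c n)) + 2 * D.v₂ (D.q n))) := by
  rw [v₂_q, show -(-D.g * (D.q n - D.c n)) + 2 * (-D.g * (D.q n - (D.c n + D.c (n + 1)) / 2))
    = -D.g * (D.q n - D.c (n + 1)) by ring]
  exact (tendsto_piecewiseSeq_nhdsGE D.q_strictMono (fun _ => by fun_prop) n).mono_left
    (nhdsWithin_mono _ Ioi_subset_Ici_self)

theorem N_mul_P_lt_max (k : ℕ) {t : ℝ} (h0 : 0 ≤ t) :
    D.N * D.P < max (t - D.takeoff k) (D.c k - t) := by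
  have hN := D.three_le_cast_N
  have hP := D.P_pos
  cases k with
  | zero =>
    refine lt_max_of_lt_left ?_
    simp only [takeoff, c]; push_cast; nlinarith [D.γ_lt]
  | succ n =>
    have hsum : (t - D.takeoff (n + 1)) + (D.c (n + 1) - t) = (2 * (D.N + n) + 1) * D.P := by
      simp only [takeoff]; push_cast; ring
    nlinarith [le_max_left (t - D.takeoff (n + 1)) (D.c (n + 1) - t),
      le_max_right (t - D.takeoff (n + 1)) (D.c (n + 1) - t), n.cast_nonneg (α := ℝ)]

section Plate

variable {D} {α : Type*} {f : ℝ → α} (hfP : Periodic f D.P)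
include hfP

theorem apply_c (n : ℕ) : f (D.c n) = f D.γ := by
  rw [← hfP.nat_mul ((n + 2 * D.N) * n) D.γ]; congr 1; simp only [c]; push_cast; ring

theorem apply_takeoff (k : ℕ) : f (D.takeoff k) = f D.γ := by
  rw [← hfP.int_mul ((k - 1) * (k - 1 + 2 * D.N)) D.γ]
  congr 1; simp only [takeoff, c]; push_cast; ring

end Plate

section Motion

variable {D} {f : ℝ → ℝ} {L : ℝ≥0} (hfP : Periodic f D.P) (hfγ : f D.γ = D.h)
  (hL : LipschitzWith L f) (hLN : 2 * L ≤ D.g * D.P * D.N)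
include hfP hfγ hL hLN

theorem f_lt_arc {k : ℕ} {t : ℝ} (h0 : 0 ≤ t) (h1 : D.takeoff k < t) (h2 : t < D.c k) :
    f t < arc D.g D.h (D.takeoff k) (D.c k) t := by
  refine lt_arc_of_lipschitzWith hL (hfγ ▸ apply_takeoff hfP k) (hfγ ▸ apply_c hfP k) h1 h2 ?_
  calc (L : ℝ) ≤ D.g / 2 * (D.N * D.P) := by linarith
    _ < _ := mul_lt_mul_of_pos_left (D.N_mul_P_lt_max k h0) (half_pos D.g_pos)

theorem f_lt_x₂ {t : ℝ} (h0 : 0 ≤ t) (ht : t ∉ range D.c) : f t < D.x₂ t := by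
  rcases lt_or_exists_mem_Ico D.tendsto_c t with h | ⟨n, hn⟩
  · rw [x₂, piecewiseSeq_of_lt h]
    exact f_lt_arc hfP hfγ hL hLN h0 (D.takeoff_zero_neg.trans_le h0) h
  · rw [x₂, piecewiseSeq_of_mem_Ico D.c_strictMono.monotone hn]
    exact f_lt_arc hfP hfγ hL hLN h0
      (D.takeoff_succ n ▸ hn.1.lt_of_ne fun h => ht ⟨n, h⟩) hn.2

noncomputable def motion (hf' : deriv f D.γ = D.g * D.P / 2) : RestrictedMotionCase1 D.g f where
  x₁ := D.x₁
  x₂ := D.x₂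
  v₁ := D.v₁
  v₂ := D.v₂
  coll₂ := range D.c
  q := D.q
  cont₁ := D.continuous_x₁.continuousOn
  cont₂ := D.continuous_x₂.continuousOn
  order t ht := by
    refine ⟨?_, ?_⟩
    · by_cases hc : t ∈ range D.c
      · obtain ⟨n, rfl⟩ := hc
        rw [D.x₂_c, apply_c hfP, hfγ]
      · exact (f_lt_x₂ hfP hfγ hL hLN ht hc).le
    · by_cases hq : t ∈ range D.q
      · obtain ⟨n, rfl⟩ := hq
        rw [D.x₁_q]
      · exact (D.x₂_lt_x₁ ht hq).le
  coll₂_sub := range_subset_iff.2 fun n => (D.c_pos n).le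
  coll₂_discrete := exists_forall_abs_sub_lt_imp_eq D.tendsto_c
  freefall₂ t ht := ⟨D.hasDerivAt_x₂ ht.2, D.hasDerivAt_v₂ ht.2⟩
  contact₂_mem t ht hx := by
    by_contra hc
    exact (f_lt_x₂ hfP hfγ hL hLN ht hc).ne' hx
  coll₂_contact := forall_mem_range.2 fun n => by rw [D.x₂_c, apply_c hfP, hfγ]
  plate_law := forall_mem_range.2 fun n _ => ⟨_, _, D.tendsto_v₂_nhdsLT n,
    D.tendsto_v₂_nhdsGT n, by rw [apply_c hfP.deriv, hf', D.v₂_reflection]⟩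
  q_strictMono := D.q_strictMono
  q_nonneg n := (D.q_pos n).le
  q_tendsto := D.tendsto_q
  q_contact := D.x₁_q
  contact₁_mem t ht hx := by
    by_contra hq
    exact (D.x₂_lt_x₁ ht fun ⟨n, hn⟩ => hq ⟨n, hn⟩).ne' hx
  freefall₁ t _ ht := ⟨D.hasDerivAt_x₁ fun ⟨n, hn⟩ => ht n hn,
    D.hasDerivAt_v₁ fun ⟨n, hn⟩ => ht n hn⟩
  ball_law n := ⟨_, D.tendsto_v₁_nhdsLT n, D.tendsto_v₁_nhdsGT n⟩

end Motion

end ResonantOrbit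

theorem restricted_case1_both_unbounded
    (g T : ℝ) (hg : 0 < g) (hT : 0 < T)
    (f : ℝ → ℝ) (hf : ContDiff ℝ 1 f) (hfper : Function.Periodic f T)
    (hclass : ∃ t₀ : ℝ, ∃ K : ℕ, 0 < K ∧ deriv f t₀ = K * T * g / 2) :
    ∃ M : RestrictedMotionCase1 g f,
      (¬ ∃ C : ℝ, ∀ t ∈ Set.Ici (0 : ℝ), |M.v₁ t| ≤ C) ∧
      (¬ ∃ C : ℝ, ∀ t ∈ Set.Ici (0 : ℝ), |M.v₂ t| ≤ C) := by
  obtain ⟨t₀, K, hK, hdK⟩ := hclass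
  have hP : 0 < (K : ℝ) * T := mul_pos (by exact_mod_cast hK) hT
  have hfP : Periodic f (K * T) := hfper.nat_mul K
  obtain ⟨γ, ⟨hPγ, hγ2P⟩, hγ⟩ := hfP.deriv.exists_mem_Ico hP t₀ (K * T)
  obtain ⟨L, hL⟩ := hfP.exists_lipschitzWith hP.ne' hf
  obtain ⟨N, hN⟩ := exists_nat_gt (2 * L / (g * (K * T)) + 3)
  have hLdiv : 0 ≤ 2 * L / (g * (K * T)) := by positivity
  have hLN : 2 * L ≤ g * (K * T) * N := by
    rw [← div_le_iff₀' (mul_pos hg hP)]; linarith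
  let D : ResonantOrbit := ⟨g, K * T, γ, f γ, N, hg, hP, hP.trans_le hPγ, by linarith,
    by exact_mod_cast (show (3 : ℝ) ≤ N by linarith)⟩
  exact ⟨D.motion hfP rfl hL hLN (by rw [← hγ, hdK]; ring),
    not_exists_forall_abs_le_of_tendsto_atTop (fun n => (D.q_pos n).le) D.tendsto_v₁_q,
    not_exists_forall_abs_le_of_tendsto_atTop (fun n => (D.c_pos n).le) D.tendsto_v₂_c⟩
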